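/- arXiv:1602.04546 — 4 statements merged into one kernel-verified Lean document; each statement's English description precedes it below -/
import Mathlib

section
/- Let r, s, t be odd integers with r < −1 < 1 < s, t and with s < −r or t < −r. Set P := (s+t−2)/2, let N ≥ P be an integer, write N = qP + j with integers q ≥ 1 and 0 ≤ j < P, and set n := N−1. Let v_j be the odd integer nearest to 2(t−1)j/(s+t−2) (taking the smaller one in case of a tie) and c_j := (s+t−6)/2 − 2j²(t−1)²/(s+t−2) + 2j(t−1)v_j + ((2−s−t)/2)·v_j². Then the maximum of R(b,c) over pairs of even integers b, c ≥ 0 with b+c ≤ 2n equals 2((1−st)/(s+t−2) − r)·N² + 2(2+r)·N + c_j. -/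
/-- The quadratic `R(b,c)` (with parameters `r,s,t,n`), evaluated on integers,
with values in `ℚ`. -/
def Rpoly (r s t n b c : ℤ) : ℚ :=
  -((r + s : ℚ) / 2) * (b : ℚ) ^ 2 - ((1 : ℚ) + r) * b * c - ((r + t : ℚ) / 2) * (c : ℚ) ^ 2
    + ((2 : ℚ) - r - s) * b + ((2 : ℚ) - r - t) * c - 2 * n

lemma int_le_sq (m : ℤ) : m ≤ m ^ 2 ∧ -m ≤ m ^ 2 := by
  rcases le_or_gt m 0 with h | h
  · constructor <;> nlinarith
  · constructor <;> nlinarith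

set_option maxHeartbeats 1000000 in
/-- For odd `r, s, t` with `r < −1 < 1 < s, t` and `s < −r` or `t < −r`: writing
`N = qP + j` with `P = (s+t−2)/2`, `q ≥ 1`, `0 ≤ j < P`, and `n = N−1`, the maximum of
`R(b,c)` over even integers `b, c ≥ 0` with `b + c ≤ 2n` equals
`2((1−st)/(s+t−2) − r)N² + 2(2+r)N + c_j`, where `v_j` is the odd integer nearest to
`2(t−1)j/(s+t−2)` (the smaller one in case of a tie) and
`c_j = (s+t−6)/2 − 2j²(t−1)²/(s+t−2) + 2j(t−1)v_j + ((2−s−t)/2)v_j²`. -/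
theorem R_max_value (r s t : ℤ) (hrodd : Odd r) (hsodd : Odd s) (htodd : Odd t)
    (hr : r < -1) (hs : 1 < s) (ht : 1 < t) (hcase : s < -r ∨ t < -r)
    (P : ℤ) (hP : P = (s + t - 2) / 2)
    (N q j : ℤ) (hNP : P ≤ N) (hq : 1 ≤ q) (hj0 : 0 ≤ j) (hjP : j < P)
    (hNqj : N = q * P + j)
    (n : ℤ) (hn : n = N - 1)
    (x : ℚ) (hx : x = 2 * ((t : ℚ) - 1) * j / ((s : ℚ) + t - 2))
    (vj : ℤ) (hvodd : Odd vj) (hv1 : x - 1 ≤ (vj : ℚ)) (hv2 : (vj : ℚ) < x + 1)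
    (cj : ℚ) (hcj : cj = ((s : ℚ) + t - 6) / 2
      - 2 * (j : ℚ) ^ 2 * ((t : ℚ) - 1) ^ 2 / ((s : ℚ) + t - 2)
      + 2 * (j : ℚ) * ((t : ℚ) - 1) * vj + (((2 : ℚ) - s - t) / 2) * (vj : ℚ) ^ 2) :
    IsGreatest {x : ℚ | ∃ b c : ℤ, Even b ∧ Even c ∧ 0 ≤ b ∧ 0 ≤ c ∧ b + c ≤ 2 * n ∧
        Rpoly r s t n b c = x}
      (2 * ((1 - (s : ℚ) * t) / ((s : ℚ) + t - 2) - r) * (N : ℚ) ^ 2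
        + 2 * (2 + (r : ℚ)) * N + cj) := by
  obtain ⟨a1, ha1⟩ := hrodd
  obtain ⟨a2, ha2⟩ := hsodd
  obtain ⟨a3, ha3⟩ := htodd
  obtain ⟨w, hw⟩ := hvodd
  have h2P : 2 * P = s + t - 2 := by omega
  have h4 : (4 : ℤ) ≤ s + t - 2 := by omega
  have hst0 : (0 : ℚ) < (s : ℚ) + t - 2 := by
    have : ((4 : ℤ) : ℚ) ≤ ((s + t - 2 : ℤ) : ℚ) := by exact_mod_cast h4
    push_cast at this; linarith
  have hstne : ((s : ℚ) + t - 2) ≠ 0 := ne_of_gt hst0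
  have hPQ : (P : ℚ) = ((s : ℚ) + t - 2) / 2 := by
    have : (2 : ℚ) * (P : ℚ) = (s : ℚ) + t - 2 := by exact_mod_cast h2P
    linarith
  have hnQ : (n : ℚ) = (N : ℚ) - 1 := by exact_mod_cast hn
  have hNQ : (N : ℚ) = (q : ℚ) * (((s : ℚ) + t - 2) / 2) + j := by
    rw [← hPQ]; exact_mod_cast hNqj
  -- the key algebraic identity on the boundary b + c = 2n
  have key : ∀ c : ℤ, Rpoly r s t n (2 * n - c) c
      = (2 * ((1 - (s : ℚ) * t) / ((s : ℚ) + t - 2) - r) * (N : ℚ) ^ 2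
          + 2 * (2 + (r : ℚ)) * N + cj)
        - ((s : ℚ) + t - 2) / 2 *
          (((c : ℚ) - ((q : ℚ) * ((s : ℚ) - 1) + 2 * (j : ℚ) - 1 - (vj : ℚ))
              - ((vj : ℚ) - x)) ^ 2 - ((vj : ℚ) - x) ^ 2) := by
    intro c
    simp only [Rpoly]
    rw [hcj, hx]
    push_cast
    rw [hnQ, hNQ]
    field_simp
    ring
  have hd1 : -1 ≤ (vj : ℚ) - x := by linarith
  have hd2 : (vj : ℚ) - x < 1 := by linarith
  -- boundary bound
  have bound : ∀ c : ℤ, Even c → Rpoly r s t n (2 * n - c) c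
      ≤ 2 * ((1 - (s : ℚ) * t) / ((s : ℚ) + t - 2) - r) * (N : ℚ) ^ 2
        + 2 * (2 + (r : ℚ)) * N + cj := by
    intro c hcE
    obtain ⟨e, he⟩ := hcE
    obtain ⟨m, hm⟩ : ∃ m : ℤ, c - (q * (s - 1) + 2 * j - 1 - vj) = 2 * m := by
      refine ⟨e - (q * a2 + j - 1 - w), ?_⟩
      rw [he, ha2, hw]; ring
    have hmQ : (c : ℚ) - ((q : ℚ) * ((s : ℚ) - 1) + 2 * (j : ℚ) - 1 - (vj : ℚ))
        = 2 * (m : ℚ) := by exact_mod_cast hm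
    rw [key c, hmQ]
    have hprod : 0 ≤ (m : ℚ) * ((m : ℚ) - ((vj : ℚ) - x)) := by
      obtain ⟨hm1, hm2⟩ := int_le_sq m
      have hm1Q : (m : ℚ) ≤ (m : ℚ) ^ 2 := by exact_mod_cast hm1
      have hm2Q : -(m : ℚ) ≤ (m : ℚ) ^ 2 := by exact_mod_cast hm2
      nlinarith [sq_nonneg ((m : ℚ))]
    nlinarith [hst0, hprod]
  constructor
  · -- membership: the witness (b₀, c₀)
    -- facts about vj
    have hx0 : 0 ≤ x := by
      rw [hx]
      apply div_nonneg _ (le_of_lt hst0)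
      have ht1 : (1 : ℚ) ≤ (t : ℚ) := by exact_mod_cast ht.le
      have hj0Q : (0 : ℚ) ≤ (j : ℚ) := by exact_mod_cast hj0
      nlinarith
    have hvm1 : (-1 : ℤ) ≤ vj := by
      have : (-1 : ℚ) ≤ (vj : ℚ) := by linarith
      exact_mod_cast this
    have hxle : x ≤ 2 * (j : ℚ) := by
      rw [hx, div_le_iff₀ hst0]
      have hs1 : (1 : ℚ) ≤ (s : ℚ) := by exact_mod_cast hs.le
      have hj0Q : (0 : ℚ) ≤ (j : ℚ) := by exact_mod_cast hj0
      nlinarith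
    have hvle : vj ≤ 2 * j - 1 := by
      have h1 : (vj : ℚ) < 2 * (j : ℚ) + 1 := by linarith
      have h2 : vj < 2 * j + 1 := by exact_mod_cast h1
      omega
    have hts : t - 1 ≤ q * (t - 1) := le_mul_of_one_le_left (by omega) hq
    have hss : s - 1 ≤ q * (s - 1) := le_mul_of_one_le_left (by omega) hq
    have hbc : q * (t - 1) + q * (s - 1) = 2 * (q * P) := by linear_combination -q * h2P
    refine ⟨q * (t - 1) - 1 + vj, q * (s - 1) + 2 * j - 1 - vj, ?_, ?_, ?_, ?_, ?_, ?_⟩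
    · exact ⟨q * a3 + w, by rw [ha3, hw]; ring⟩
    · exact ⟨q * a2 + j - 1 - w, by rw [ha2, hw]; ring⟩
    · omega
    · omega
    · omega
    · have hb0 : q * (t - 1) - 1 + vj = 2 * n - (q * (s - 1) + 2 * j - 1 - vj) := by omega
      rw [hb0, key (q * (s - 1) + 2 * j - 1 - vj)]
      push_cast
      ring
  · -- upper bound
    rintro y ⟨b, c, hbE, hcE, hb0, hc0, hsum, heq⟩
    rw [← heq]
    have hrQ : (r : ℚ) ≤ -3 := by
      have : r ≤ -3 := by omega
      exact_mod_cast this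
    have hbQ : (0 : ℚ) ≤ (b : ℚ) := by exact_mod_cast hb0
    have hcQ : (0 : ℚ) ≤ (c : ℚ) := by exact_mod_cast hc0
    rcases hcase with hcs | hct
    · -- s < -r : increase b up to the boundary
      have hb' : (b : ℚ) ≤ 2 * (n : ℚ) - c := by
        have : (b : ℤ) ≤ 2 * n - c := by omega
        exact_mod_cast this
      have hrsQ : (r : ℚ) + s ≤ 0 := by
        have : r + s ≤ 0 := by omega
        exact_mod_cast this
      have hdiff : Rpoly r s t n (2 * n - c) c - Rpoly r s t n b c
          = ((2 * (n : ℚ) - c) - b)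
            * (-(((r : ℚ) + s) / 2) * ((2 * (n : ℚ) - c) + b)
              - (1 + (r : ℚ)) * c + 2 - r - s) := by
        simp only [Rpoly]; push_cast; ring
      have hfac : 0 ≤ ((2 * (n : ℚ) - c) - b)
          * (-(((r : ℚ) + s) / 2) * ((2 * (n : ℚ) - c) + b)
            - (1 + (r : ℚ)) * c + 2 - r - s) := by
        apply mul_nonneg (by linarith)
        nlinarith
      have h1 : Rpoly r s t n b c ≤ Rpoly r s t n (2 * n - c) c := by linarith
      exact le_trans h1 (bound c hcE)
    · -- t < -r : increase c up to the boundary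
      have hb' : (c : ℚ) ≤ 2 * (n : ℚ) - b := by
        have : (c : ℤ) ≤ 2 * n - b := by omega
        exact_mod_cast this
      have hrtQ : (r : ℚ) + t ≤ 0 := by
        have : r + t ≤ 0 := by omega
        exact_mod_cast this
      have hdiff : Rpoly r s t n b (2 * n - b) - Rpoly r s t n b c
          = ((2 * (n : ℚ) - b) - c)
            * (-(((r : ℚ) + t) / 2) * ((2 * (n : ℚ) - b) + c)
              - (1 + (r : ℚ)) * b + 2 - r - t) := by
        simp only [Rpoly]; push_cast; ring
      have hfac : 0 ≤ ((2 * (n : ℚ) - b) - c)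
          * (-(((r : ℚ) + t) / 2) * ((2 * (n : ℚ) - b) + c)
            - (1 + (r : ℚ)) * b + 2 - r - t) := by
        apply mul_nonneg (by linarith)
        nlinarith
      have h1 : Rpoly r s t n b c ≤ Rpoly r s t n b (2 * n - b) := by linarith
      have hE : Even (2 * n - b) := by
        obtain ⟨e, he⟩ := hbE
        exact ⟨n - e, by omega⟩
      have h2 := bound (2 * n - b) hE
      rw [show 2 * n - (2 * n - b) = b by ring] at h2
      exact le_trans h1 h2
end

section
/- Let r, s, t be integers with r ≤ −1 and s, t ≥ 2, and let n ≥ 1. For even triples in D_n the following strict monotonicity holds: (i) if (a,b,c) ∈ D_n and (a+2,b,c) ∈ D_n then Φ(a+2,b,c,n) > Φ(a,b,c,n); (ii) if (a,b,c) ∈ D_n and (a,b+2,c) ∈ D_n then Φ(a,b+2,c,n) < Φ(a,b,c,n); (iii) if (a,b,c) ∈ D_n and (a,b,c+2) ∈ D_n then Φ(a,b,c+2,n) < Φ(a,b,c,n). -/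
/-- `g(N,k) = 2k(N−k)`. -/
def gq (N k : ℚ) : ℚ := 2 * k * (N - k)

/-- Membership in the summation domain `D_n`: triples of even integers with
`0 ≤ a,b,c ≤ 2n` and `|a−b| ≤ c ≤ a+b`. -/
def Dn (n a b c : ℤ) : Prop :=
  Even a ∧ Even b ∧ Even c ∧ 0 ≤ a ∧ a ≤ 2 * n ∧ 0 ≤ b ∧ b ≤ 2 * n ∧ 0 ≤ c ∧ c ≤ 2 * n ∧
    |a - b| ≤ c ∧ c ≤ a + b

/-- `θ(u₁,u₂,u₃) = u₁(1−u₁)+u₂(1−u₂)+u₃(1−u₃)+(u₁+u₂+u₃)²/2`, the maximal degree of a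
colored theta graph. -/
def thetaFun (u₁ u₂ u₃ : ℚ) : ℚ :=
  u₁ * (1 - u₁) + u₂ * (1 - u₂) + u₃ * (1 - u₃) + (u₁ + u₂ + u₃) ^ 2 / 2

/-- `δ(a,b,c,n) = g(m+1,σ+1) + g(x,m−p₁) + g(y,m−p₂) + g(w,m−p₃)`, the maximal degree of
the 6j-symbol quotient `Δ(a,b,c,n,n,n)`. -/
def deltaFun (n a b c : ℤ) : ℚ :=
  let σ : ℚ := ((a : ℚ) + b + c) / 2
  let x : ℚ := (-(a : ℚ) + b + c) / 2
  let y : ℚ := ((a : ℚ) - b + c) / 2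
  let w : ℚ := ((a : ℚ) + b - c) / 2
  let p₁ : ℚ := (n : ℚ) + (a : ℚ) / 2
  let p₂ : ℚ := (n : ℚ) + (b : ℚ) / 2
  let p₃ : ℚ := (n : ℚ) + (c : ℚ) / 2
  let m : ℚ := (n : ℚ) + ((a : ℚ) + b + c - ((max a (max b c) : ℤ) : ℚ)) / 2
  gq (m + 1) (σ + 1) + gq x (m - p₁) + gq y (m - p₂) + gq w (m - p₃)

/-- `Φ(a,b,c,n)`, the maximal `v`-degree of the `(a,b,c)`-summand in the fusion state sum
for the `(n+1)`-colored Jones polynomial of the pretzel knot `P(1/r,1/s,1/t)`. -/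
def Phi (r s t a b c n : ℤ) : ℚ :=
  2 * ((a : ℚ) + b + c)
    - ((r : ℚ) * a * (a + 2) + (s : ℚ) * b * (b + 2) + (t : ℚ) * c * (c + 2)) / 2
    + 2 * deltaFun n a b c
    + thetaFun a b c - thetaFun a n n - thetaFun b n n - thetaFun c n n

lemma Phi_eq (r s t a b c n : ℤ) :
    Phi r s t a b c n =
      2 * ((a:ℚ) + b + c) - 2 * n
        - ((r:ℚ) * a * (a + 2) + (s:ℚ) * b * (b + 2) + (t:ℚ) * c * (c + 2)) / 2
        - ((a:ℚ) * b + (a:ℚ) * c + (b:ℚ) * c)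
        + (2 * ((a:ℚ) + b + c) - 2) * ((max a (max b c) : ℤ) : ℚ)
        - 3 * ((max a (max b c) : ℤ) : ℚ) ^ 2 := by
  simp only [Phi, deltaFun, thetaFun, gq]; ring

/-- Strict monotonicity of `Φ` on `D_n` for `r ≤ −1`, `s, t ≥ 2`: `Φ` strictly increases
in `a` and strictly decreases in `b` and in `c` (in steps of `2` inside `D_n`). -/
theorem Phi_monotonicity (r s t n : ℤ) (hr : r ≤ -1) (hs : 2 ≤ s) (ht : 2 ≤ t)
    (hn : 1 ≤ n) :
    (∀ a b c : ℤ, Dn n a b c → Dn n (a + 2) b c →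
      Phi r s t (a + 2) b c n > Phi r s t a b c n) ∧
    (∀ a b c : ℤ, Dn n a b c → Dn n a (b + 2) c →
      Phi r s t a (b + 2) c n < Phi r s t a b c n) ∧
    (∀ a b c : ℤ, Dn n a b c → Dn n a b (c + 2) →
      Phi r s t a b (c + 2) n < Phi r s t a b c n) := by
  refine ⟨?_, ?_, ?_⟩
  · intro a b c h1 h2
    obtain ⟨⟨a0, ha0⟩, ⟨b0, hb0⟩, ⟨c0, hc0⟩, hA0, hA1, hB0, hB1, hC0, hC1, habc, hcab⟩ := h1
    obtain ⟨-, -, -, -, -, -, -, -, -, habc2, -⟩ := h2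
    rw [abs_le] at habc habc2
    have hbc := max_choice b c
    rw [gt_iff_lt, Phi_eq, Phi_eq]
    rcases le_or_gt (max b c) a with hM | hM
    · rw [max_eq_left hM, max_eq_left (by omega : max b c ≤ a + 2)]
      have h3 : a + 2 ≤ b + c := by omega
      have h3' : (a:ℚ) + 2 ≤ (b:ℚ) + c := by exact_mod_cast h3
      have hr' : (r:ℚ) ≤ -1 := by exact_mod_cast hr
      push_cast
      nlinarith [mul_nonneg (by linarith : (0:ℚ) ≤ -1 - (r:ℚ)) (by positivity : (0:ℚ) ≤ (a:ℚ) + 2),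
        (by exact_mod_cast hA0 : (0:ℚ) ≤ (a:ℚ))]
    · have hM2 : a + 2 ≤ max b c := by omega
      rw [max_eq_right (by omega : a ≤ max b c), max_eq_right hM2]
      have h4 : b + c ≤ 2 * max b c := by omega
      have h4' : (b:ℚ) + c ≤ 2 * ((max b c : ℤ) : ℚ) := by exact_mod_cast h4
      have hr' : (r:ℚ) ≤ -1 := by exact_mod_cast hr
      push_cast at h4' ⊢
      nlinarith [mul_nonneg (by linarith : (0:ℚ) ≤ -1 - (r:ℚ)) (by positivity : (0:ℚ) ≤ (a:ℚ) + 2),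
        (by exact_mod_cast hA0 : (0:ℚ) ≤ (a:ℚ))]
  · intro a b c h1 h2
    obtain ⟨⟨a0, ha0⟩, ⟨b0, hb0⟩, ⟨c0, hc0⟩, hA0, hA1, hB0, hB1, hC0, hC1, habc, hcab⟩ := h1
    rw [abs_le] at habc
    have hac := max_choice a c
    have hkey : max a (max b c) = max b (max a c) := by
      rcases max_choice b c with h | h <;> rcases max_choice a c with h' | h' <;> omega
    have hkey2 : max a (max (b+2) c) = max (b+2) (max a c) := by
      rcases max_choice (b+2) c with h | h <;> rcases max_choice a c with h' | h' <;> omega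
    rw [Phi_eq, Phi_eq, hkey, hkey2]
    have hs' : (2:ℚ) ≤ (s:ℚ) := by exact_mod_cast hs
    rcases le_or_gt (max a c) b with hM | hM
    · rw [max_eq_left (by omega : max a c ≤ b), max_eq_left (by omega : max a c ≤ b + 2)]
      have h3 : a ≤ b ∧ c ≤ b := by omega
      have h3a : (a:ℚ) ≤ (b:ℚ) := by exact_mod_cast h3.1
      have h3c : (c:ℚ) ≤ (b:ℚ) := by exact_mod_cast h3.2
      push_cast
      nlinarith [mul_nonneg (by linarith : (0:ℚ) ≤ (s:ℚ) - 2) (by positivity : (0:ℚ) ≤ (b:ℚ) + 2),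
        (by exact_mod_cast hB0 : (0:ℚ) ≤ (b:ℚ))]
    · have hM2 : b + 2 ≤ max a c := by omega
      rw [max_eq_right (by omega : b ≤ max a c), max_eq_right hM2]
      have h4 : 2 * max a c ≤ a + b + c := by omega
      have h4' : 2 * ((max a c : ℤ) : ℚ) ≤ (a:ℚ) + b + c := by exact_mod_cast h4
      push_cast at h4' ⊢
      nlinarith [mul_nonneg (by linarith : (0:ℚ) ≤ (s:ℚ) - 2) (by positivity : (0:ℚ) ≤ (b:ℚ) + 2),
        (by exact_mod_cast hB0 : (0:ℚ) ≤ (b:ℚ))]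
  · intro a b c h1 h2
    obtain ⟨⟨a0, ha0⟩, ⟨b0, hb0⟩, ⟨c0, hc0⟩, hA0, hA1, hB0, hB1, hC0, hC1, habc, hcab⟩ := h1
    rw [abs_le] at habc
    have hab := max_choice a b
    have hkey : max a (max b c) = max c (max a b) := by
      rcases max_choice b c with h | h <;> rcases max_choice a b with h' | h' <;> omega
    have hkey2 : max a (max b (c+2)) = max (c+2) (max a b) := by
      rcases max_choice b (c+2) with h | h <;> rcases max_choice a b with h' | h' <;> omega
    rw [Phi_eq, Phi_eq, hkey, hkey2]
    have ht' : (2:ℚ) ≤ (t:ℚ) := by exact_mod_cast ht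
    rcases le_or_gt (max a b) c with hM | hM
    · rw [max_eq_left (by omega : max a b ≤ c), max_eq_left (by omega : max a b ≤ c + 2)]
      have h3 : a ≤ c ∧ b ≤ c := by omega
      have h3a : (a:ℚ) ≤ (c:ℚ) := by exact_mod_cast h3.1
      have h3b : (b:ℚ) ≤ (c:ℚ) := by exact_mod_cast h3.2
      push_cast
      nlinarith [mul_nonneg (by linarith : (0:ℚ) ≤ (t:ℚ) - 2) (by positivity : (0:ℚ) ≤ (c:ℚ) + 2),
        (by exact_mod_cast hC0 : (0:ℚ) ≤ (c:ℚ))]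
    · have hM2 : c + 2 ≤ max a b := by omega
      rw [max_eq_right (by omega : c ≤ max a b), max_eq_right hM2]
      have h4 : 2 * max a b ≤ a + b + c := by omega
      have h4' : 2 * ((max a b : ℤ) : ℚ) ≤ (a:ℚ) + b + c := by exact_mod_cast h4
      push_cast at h4' ⊢
      nlinarith [mul_nonneg (by linarith : (0:ℚ) ≤ (t:ℚ) - 2) (by positivity : (0:ℚ) ≤ (c:ℚ) + 2),
        (by exact_mod_cast hC0 : (0:ℚ) ≤ (c:ℚ))]
end

section
/- Let r, s, t be integers with r ≤ −1 and s, t ≥ 2, and let n ≥ 1. Then the maximum of Φ(a,b,c,n) over triples (a,b,c) ∈ D_n equals the maximum of R(b,c) over pairs of even integers b, c ≥ 0 with b+c ≤ 2n, and every maximizing triple (a,b,c) of Φ on D_n satisfies a = b+c. -/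
lemma Phi_case_a (r s t n a b c : ℤ) (h : max a (max b c) = a) :
    Phi r s t a b c n =
      -2*(n:ℚ) + 2*c - c*t - c^2*t/2 + 2*b - b*s - b*c - b^2*s/2
        - a*r + a*c + a*b - (a:ℚ)^2 - a^2*r/2 := by
  simp only [Phi, deltaFun, thetaFun, gq, h]
  ring
lemma Phi_case_b (r s t n a b c : ℤ) (h : max a (max b c) = b) :
    Phi r s t a b c n =
      -2*(n:ℚ) + 2*c - c*t - c^2*t/2 - b*s + b*c - (b:ℚ)^2 - b^2*s/2
        + 2*a - a*r - a*c + a*b - a^2*r/2 := by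
  simp only [Phi, deltaFun, thetaFun, gq, h]
  ring

lemma Phi_case_c (r s t n a b c : ℤ) (h : max a (max b c) = c) :
    Phi r s t a b c n =
      -2*(n:ℚ) - c*t - (c:ℚ)^2 - c^2*t/2 + 2*b - b*s + b*c - b^2*s/2
        + 2*a - a*r + a*c - a*b - a^2*r/2 := by
  simp only [Phi, deltaFun, thetaFun, gq, h]
  ring

lemma Phi_eq_R (r s t n b c : ℤ) (hb : 0 ≤ b) (hc : 0 ≤ c) :
    Phi r s t (b + c) b c n = Rpoly r s t n b c := by
  have hm : max (b + c) (max b c) = b + c := max_eq_left (max_le (by omega) (by omega))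
  rw [Phi_case_a r s t n (b + c) b c hm, Rpoly]
  push_cast
  ring

/-- Master gap lemma: on the triangle region, `R(b,c) − Φ(a,b,c) ≥ b+c−a`. -/
lemma gap_lower (r s t n a b c : ℤ) (hr : r ≤ -1) (hs : 2 ≤ s) (ht : 2 ≤ t)
    (ha0 : 0 ≤ a) (hb0 : 0 ≤ b) (hc0 : 0 ≤ c)
    (h1 : a ≤ b + c) (h2 : b ≤ a + c) (h3 : c ≤ a + b) :
    ((b : ℚ) + c - a) ≤ Rpoly r s t n b c - Phi r s t a b c n := by
  have Hr : (r:ℚ) ≤ -1 := by exact_mod_cast hr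
  have Ha0 : (0:ℚ) ≤ a := by exact_mod_cast ha0
  have Hb0 : (0:ℚ) ≤ b := by exact_mod_cast hb0
  have Hc0 : (0:ℚ) ≤ c := by exact_mod_cast hc0
  have H1 : (a:ℚ) ≤ b + c := by exact_mod_cast h1
  have H2 : (b:ℚ) ≤ a + c := by exact_mod_cast h2
  have H3 : (c:ℚ) ≤ a + b := by exact_mod_cast h3
  have hnr : (0:ℚ) ≤ -r := by linarith
  have h01 : (0:ℚ) ≤ -1 - r := by linarith
  rcases le_total b c with hbc | hbc
  · rcases le_total a c with hac | hac
    · -- max = c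
      have hm : max a (max b c) = c := by
        rw [max_eq_right hbc, max_eq_right hac]
      rw [Phi_case_c r s t n a b c hm, Rpoly]
      have Hac : (a:ℚ) ≤ c := by exact_mod_cast hac
      have Hbc : (b:ℚ) ≤ c := by exact_mod_cast hbc
      nlinarith [mul_nonneg hnr (by linarith : (0:ℚ) ≤ c - a),
        mul_nonneg h01 Hb0,
        mul_nonneg hnr (mul_nonneg (by linarith : (0:ℚ) ≤ b - (c - a)) (by linarith : (0:ℚ) ≤ b + (c - a))),
        mul_nonneg (by linarith : (0:ℚ) ≤ c - a) (by linarith : (0:ℚ) ≤ c - b),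
        mul_nonneg hnr (mul_nonneg Hc0 (by linarith : (0:ℚ) ≤ c - a)),
        mul_nonneg h01 (mul_nonneg Hb0 Hc0)]
    · -- c ≤ a, b ≤ c ≤ a : max = a
      have hm : max a (max b c) = a := by
        rw [max_eq_right hbc]; exact max_eq_left hac
      rw [Phi_case_a r s t n a b c hm, Rpoly]
      nlinarith [mul_nonneg (by linarith : (0:ℚ) ≤ b + c - a) h01,
        sq_nonneg ((b:ℚ) + c - a),
        mul_nonneg (mul_nonneg (by linarith : (0:ℚ) ≤ b + c - a) h01)
          (by linarith : (0:ℚ) ≤ a + (b + c))]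
  · rcases le_total a b with hab | hab
    · -- max = b
      have hm : max a (max b c) = b := by
        rw [max_eq_left hbc]; exact max_eq_right hab
      rw [Phi_case_b r s t n a b c hm, Rpoly]
      have Hab : (a:ℚ) ≤ b := by exact_mod_cast hab
      have Hcb : (c:ℚ) ≤ b := by exact_mod_cast hbc
      nlinarith [mul_nonneg hnr (by linarith : (0:ℚ) ≤ b - a),
        mul_nonneg h01 Hc0,
        mul_nonneg hnr (mul_nonneg (by linarith : (0:ℚ) ≤ c - (b - a)) (by linarith : (0:ℚ) ≤ c + (b - a))),
        mul_nonneg (by linarith : (0:ℚ) ≤ b - a) (by linarith : (0:ℚ) ≤ b - c),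
        mul_nonneg hnr (mul_nonneg Hb0 (by linarith : (0:ℚ) ≤ b - a)),
        mul_nonneg h01 (mul_nonneg Hb0 Hc0)]
    · -- max = a
      have hm : max a (max b c) = a := by
        rw [max_eq_left hbc]; exact max_eq_left hab
      rw [Phi_case_a r s t n a b c hm, Rpoly]
      nlinarith [mul_nonneg (by linarith : (0:ℚ) ≤ b + c - a) h01,
        sq_nonneg ((b:ℚ) + c - a),
        mul_nonneg (mul_nonneg (by linarith : (0:ℚ) ≤ b + c - a) h01)
          (by linarith : (0:ℚ) ≤ a + (b + c))]

set_option maxHeartbeats 8000000 in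
/-- When `b+c ≥ 2n+2`, `Φ(a,b,c)` is at least 4 below `R(2n−c, c)`. -/
lemma gap_big (r s t n a b c : ℤ) (hr : r ≤ -1) (hs : 2 ≤ s) (ht : 2 ≤ t) (hn : 1 ≤ n)
    (ha0 : 0 ≤ a) (hb0 : 0 ≤ b) (hc0 : 0 ≤ c)
    (h1 : a ≤ b + c) (h2 : b ≤ a + c) (h3 : c ≤ a + b)
    (han : a ≤ 2*n) (hbn : b ≤ 2*n) (hcn : c ≤ 2*n) (hk : 2*n + 2 ≤ b + c) :
    (4 : ℚ) ≤ Rpoly r s t n (2*n - c) c - Phi r s t a b c n := by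
  have Hr : (r:ℚ) ≤ -1 := by exact_mod_cast hr
  have Hs : (2:ℚ) ≤ s := by exact_mod_cast hs
  have Ha0 : (0:ℚ) ≤ a := by exact_mod_cast ha0
  have Hb0 : (0:ℚ) ≤ b := by exact_mod_cast hb0
  have Hc0 : (0:ℚ) ≤ c := by exact_mod_cast hc0
  have H1 : (a:ℚ) ≤ b + c := by exact_mod_cast h1
  have H2 : (b:ℚ) ≤ a + c := by exact_mod_cast h2
  have H3 : (c:ℚ) ≤ a + b := by exact_mod_cast h3
  have Han : (a:ℚ) ≤ 2*n := by exact_mod_cast han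
  have Hbn : (b:ℚ) ≤ 2*n := by exact_mod_cast hbn
  have Hcn : (c:ℚ) ≤ 2*n := by exact_mod_cast hcn
  have Hk : 2*(n:ℚ) + 2 ≤ b + c := by exact_mod_cast hk
  have Hn : (1:ℚ) ≤ n := by exact_mod_cast hn
  have h01 : (0:ℚ) ≤ -1 - r := by linarith
  have hs2 : (0:ℚ) ≤ s - 2 := by linarith
  have hRp : Rpoly r s t n (2*n - c) c =
      -((r + s : ℚ) / 2) * ((2*(n:ℚ) - c)) ^ 2 - ((1 : ℚ) + r) * (2*(n:ℚ) - c) * c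
        - ((r + t : ℚ) / 2) * (c : ℚ) ^ 2
        + ((2 : ℚ) - r - s) * (2*(n:ℚ) - c) + ((2 : ℚ) - r - t) * c - 2 * n := by
    rw [Rpoly]; push_cast; ring
  have hP1 : (0:ℚ) ≤ (-1 - r) * (2*n - a + (4*n^2 - a^2)/2) := by
    have : (0:ℚ) ≤ 2*n - a + (4*n^2 - a^2)/2 := by
      nlinarith [mul_nonneg (by linarith : (0:ℚ) ≤ 2*n - a) (by linarith : (0:ℚ) ≤ 2*n + a)]
    exact mul_nonneg h01 this
  have hP2 : (0:ℚ) ≤ (s - 2) * ((b + c - 2*n) + ((b + c - 2*n) * (b + 2*n - c))/2) := by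
    have : (0:ℚ) ≤ (b + c - 2*n) + ((b + c - 2*n) * (b + 2*n - c))/2 := by
      nlinarith [mul_nonneg (by linarith : (0:ℚ) ≤ b + c - 2*n) (by linarith : (0:ℚ) ≤ b + 2*n - c)]
    exact mul_nonneg hs2 this
  rcases le_total b c with hbc | hbc
  · rcases le_total a c with hac | hac
    · -- max = c
      have hm : max a (max b c) = c := by rw [max_eq_right hbc, max_eq_right hac]
      rw [Phi_case_c r s t n a b c hm, hRp]
      have Hac : (a:ℚ) ≤ c := by exact_mod_cast hac
      have Hbc : (b:ℚ) ≤ c := by exact_mod_cast hbc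
      have f1 : (0:ℚ) ≤ a * (c - a) := mul_nonneg Ha0 (by linarith)
      have f2 : (0:ℚ) ≤ (c - a) * (c - a) := mul_nonneg (by linarith) (by linarith)
      have f3 : (0:ℚ) ≤ (c - a) * (c - b) := mul_nonneg (by linarith) (by linarith)
      have f4 : (0:ℚ) ≤ b * (2*n - c) := mul_nonneg Hb0 (by linarith)
      have f5 : (0:ℚ) ≤ b * (b + c - 2*n - 2) := mul_nonneg Hb0 (by linarith)
      have f6 : (0:ℚ) ≤ (2*n - c) * (b + c - 2*n - 2) := mul_nonneg (by linarith) (by linarith)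
      linarith [hP1, hP2, f1, f2, f3, f4, f5, f6]
    · have hm : max a (max b c) = a := by rw [max_eq_right hbc]; exact max_eq_left hac
      rw [Phi_case_a r s t n a b c hm, hRp]
      have hE : (2:ℚ) ≤ -a + (s*(b + 2*n - c))/2 + c + s - 2 := by
        have f : (0:ℚ) ≤ (s - 2) * (b + 2*n - c) := mul_nonneg hs2 (by linarith)
        linarith
      have hG : (1:ℚ) ≤ -r - a - (r*(a + 2*n))/2 := by
        have f : (0:ℚ) ≤ (-1 - r) * (a + 2*n) := mul_nonneg h01 (by linarith)
        linarith
      have f1 : (0:ℚ) ≤ (b + c - 2*n - 2) * ((-a + (s*(b + 2*n - c))/2 + c + s - 2) - 2) :=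
        mul_nonneg (by linarith) (by linarith)
      have f2 : (0:ℚ) ≤ (2*n - a) * ((-r - a - (r*(a + 2*n))/2) - 1) :=
        mul_nonneg (by linarith) (by linarith)
      linarith [f1, f2, hE, hG]
  · rcases le_total a b with hab | hab
    · -- max = b
      have hm : max a (max b c) = b := by rw [max_eq_left hbc]; exact max_eq_right hab
      rw [Phi_case_b r s t n a b c hm, hRp]
      have Hab : (a:ℚ) ≤ b := by exact_mod_cast hab
      have Hcb : (c:ℚ) ≤ b := by exact_mod_cast hbc
      have f1 : (0:ℚ) ≤ a * (b - a) := mul_nonneg Ha0 (by linarith)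
      have f2 : (0:ℚ) ≤ a * (b + c - 2*n - 2) := mul_nonneg Ha0 (by linarith)
      have f3 : (0:ℚ) ≤ (b - a) * (b - a) := mul_nonneg (by linarith) (by linarith)
      have f4 : (0:ℚ) ≤ (b - a) * (b - c) := mul_nonneg (by linarith) (by linarith)
      have f5 : (0:ℚ) ≤ (b - a) * (b + c - 2*n - 2) := mul_nonneg (by linarith) (by linarith)
      have f6 : (0:ℚ) ≤ c * (2*n - b) := mul_nonneg Hc0 (by linarith)
      have f7 : (0:ℚ) ≤ (2*n - b) * (b + c - 2*n - 2) := mul_nonneg (by linarith) (by linarith)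
      linarith [hP1, hP2, f1, f2, f3, f4, f5, f6, f7]
    · have hm : max a (max b c) = a := by rw [max_eq_left hbc]; exact max_eq_left hab
      rw [Phi_case_a r s t n a b c hm, hRp]
      have hE : (2:ℚ) ≤ -a + (s*(b + 2*n - c))/2 + c + s - 2 := by
        have f : (0:ℚ) ≤ (s - 2) * (b + 2*n - c) := mul_nonneg hs2 (by linarith)
        linarith
      have hG : (1:ℚ) ≤ -r - a - (r*(a + 2*n))/2 := by
        have f : (0:ℚ) ≤ (-1 - r) * (a + 2*n) := mul_nonneg h01 (by linarith)
        linarith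
      have f1 : (0:ℚ) ≤ (b + c - 2*n - 2) * ((-a + (s*(b + 2*n - c))/2 + c + s - 2) - 2) :=
        mul_nonneg (by linarith) (by linarith)
      have f2 : (0:ℚ) ≤ (2*n - a) * ((-r - a - (r*(a + 2*n))/2) - 1) :=
        mul_nonneg (by linarith) (by linarith)
      linarith [f1, f2, hE, hG]

set_option maxHeartbeats 8000000 in
/-- For `r ≤ −1`, `s, t ≥ 2` and `n ≥ 1`: the maximum of `Φ(a,b,c,n)` over `D_n` equals
the maximum of `R(b,c)` over even integers `b, c ≥ 0` with `b + c ≤ 2n`, and every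
maximizing triple of `Φ` on `D_n` satisfies `a = b + c`. -/
theorem Phi_max_eq_R_max (r s t n : ℤ) (hr : r ≤ -1) (hs : 2 ≤ s) (ht : 2 ≤ t)
    (hn : 1 ≤ n) :
    ∃ M : ℚ,
      IsGreatest {x : ℚ | ∃ a b c : ℤ, Dn n a b c ∧ Phi r s t a b c n = x} M ∧
      IsGreatest {x : ℚ | ∃ b c : ℤ, Even b ∧ Even c ∧ 0 ≤ b ∧ 0 ≤ c ∧ b + c ≤ 2 * n ∧
        Rpoly r s t n b c = x} M ∧
      ∀ a b c : ℤ, Dn n a b c → Phi r s t a b c n = M → a = b + c := by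
  classical
  set T : Finset (ℤ × ℤ) :=
    (Finset.Icc (0:ℤ) (2*n) ×ˢ Finset.Icc (0:ℤ) (2*n)).filter
      (fun p => Even p.1 ∧ Even p.2 ∧ p.1 + p.2 ≤ 2*n) with hTdef
  have hmemT : ∀ p : ℤ × ℤ, p ∈ T ↔
      (0 ≤ p.1 ∧ p.1 ≤ 2*n) ∧ (0 ≤ p.2 ∧ p.2 ≤ 2*n) ∧ Even p.1 ∧ Even p.2 ∧ p.1 + p.2 ≤ 2*n := by
    intro p
    simp [hTdef, Finset.mem_filter, Finset.mem_product, Finset.mem_Icc, and_assoc]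
  have hT0 : ((0,0) : ℤ × ℤ) ∈ T := by
    rw [hmemT]
    refine ⟨⟨le_refl _, by omega⟩, ⟨le_refl _, by omega⟩, Even.zero, Even.zero, by omega⟩
  obtain ⟨p₀, hp₀T, hub⟩ :=
    T.exists_max_image (fun p => Rpoly r s t n p.1 p.2) ⟨(0,0), hT0⟩
  set M := Rpoly r s t n p₀.1 p₀.2 with hMdef
  have hp₀ : Rpoly r s t n p₀.1 p₀.2 = M := rfl
  obtain ⟨⟨hb₀0, hb₀n⟩, ⟨hc₀0, hc₀n⟩, hEb₀, hEc₀, hbc₀⟩ := (hmemT p₀).mp hp₀T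
  -- key upper-bound fact
  have key : ∀ a b c : ℤ, Dn n a b c →
      Phi r s t a b c n ≤ M ∧ (Phi r s t a b c n = M → a = b + c) := by
    intro a b c hD
    obtain ⟨hEa, hEb, hEc, ha0, han, hb0, hbn, hc0, hcn, habs, h3⟩ := hD
    obtain ⟨h1', h2'⟩ := abs_le.mp habs
    have h1 : a ≤ b + c := by omega
    have h2 : b ≤ a + c := by omega
    by_cases hle : b + c ≤ 2*n
    · have hmem : ((b, c) : ℤ × ℤ) ∈ T := by
        rw [hmemT]; exact ⟨⟨hb0, hbn⟩, ⟨hc0, hcn⟩, hEb, hEc, hle⟩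
      have hgap := gap_lower r s t n a b c hr hs ht ha0 hb0 hc0 h1 h2 h3
      have hR := hub (b, c) hmem
      have hcast : (0:ℚ) ≤ (b:ℚ) + c - a := by
        have : (a:ℚ) ≤ (b:ℚ) + c := by exact_mod_cast h1
        linarith
      constructor
      · linarith
      · intro hPhiM
        have : ((b:ℚ) + c - a) ≤ 0 := by linarith
        have hba : (b:ℚ) + c ≤ a := by linarith
        have : b + c ≤ a := by exact_mod_cast hba
        omega
    · push_neg at hle
      have hk : 2*n + 2 ≤ b + c := by
        obtain ⟨i, hi⟩ := hEb
        obtain ⟨j, hj⟩ := hEc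
        omega
      have hmem : ((2*n - c, c) : ℤ × ℤ) ∈ T := by
        rw [hmemT]
        refine ⟨⟨by omega, by omega⟩, ⟨hc0, hcn⟩, ?_, hEc, by omega⟩
        exact (Even.sub ⟨n, two_mul n⟩ hEc)
      have hgap := gap_big r s t n a b c hr hs ht hn ha0 hb0 hc0 h1 h2 h3 han hbn hcn hk
      have hR := hub (2*n - c, c) hmem
      constructor
      · linarith
      · intro hPhiM; exfalso; linarith
  refine ⟨M, ⟨⟨p₀.1 + p₀.2, p₀.1, p₀.2, ?_, ?_⟩, ?_⟩, ⟨⟨p₀.1, p₀.2, hEb₀, hEc₀, hb₀0, hc₀0, hbc₀, hp₀⟩, ?_⟩, ?_⟩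
  · -- Dn membership of the maximizer triple
    refine ⟨Even.add hEb₀ hEc₀, hEb₀, hEc₀, by omega, by omega, hb₀0, by omega, hc₀0, by omega,
      ?_, by omega⟩
    rw [abs_le]; omega
  · rw [Phi_eq_R r s t n p₀.1 p₀.2 hb₀0 hc₀0]
  · -- upper bound for the Phi set
    rintro x ⟨a, b, c, hD, rfl⟩
    exact (key a b c hD).1
  · -- upper bound for the R set
    rintro x ⟨b, c, hEb, hEc, hb0, hc0, hbc, rfl⟩
    exact hub (b, c) ((hmemT (b, c)).mpr ⟨⟨hb0, by omega⟩, ⟨hc0, by omega⟩, hEb, hEc, hbc⟩)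
  · intro a b c hD hPhiM
    exact (key a b c hD).2 hPhiM
end

section
/- Let r, s, t be odd integers with r ≤ −1, s > −2r and t > −2r, and let n ≥ 1. Then the maximum of Φ(a,b,c,n) over triples (a,b,c) ∈ D_n equals −2n, and it is attained uniquely at (a,b,c) = (0,0,0). -/
lemma Phi_eq_a (r s t n a b c : ℤ) (hba : b ≤ a) (hca : c ≤ a) :
    Phi r s t a b c n = -2 * n + (-(r : ℚ) / 2 * (a * (a + 2)) - (s : ℚ) / 2 * (b * (b + 2))
      - (t : ℚ) / 2 * (c * (c + 2)) + 2 * ((b : ℚ) + c)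
      - ((a : ℚ) - b) * ((a : ℚ) - c)) := by
  have hmax : max a (max b c) = a := max_eq_left (max_le hba hca)
  simp only [Phi, deltaFun, thetaFun, gq, hmax]
  push_cast
  ring

lemma Phi_eq_b (r s t n a b c : ℤ) (hab : a ≤ b) (hcb : c ≤ b) :
    Phi r s t a b c n = -2 * n + (-(r : ℚ) / 2 * (a * (a + 2)) - (s : ℚ) / 2 * (b * (b + 2))
      - (t : ℚ) / 2 * (c * (c + 2)) + 2 * ((a : ℚ) + c)
      - ((b : ℚ) - a) * ((b : ℚ) - c)) := by
  have hmax : max a (max b c) = b := by rw [max_eq_left hcb, max_eq_right hab]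
  simp only [Phi, deltaFun, thetaFun, gq, hmax]
  push_cast
  ring

lemma Phi_swap (r s t n a b c : ℤ) : Phi r s t a b c n = Phi r t s a c b n := by
  have hmax : max a (max c b) = max a (max b c) := by rw [max_comm c b]
  simp only [Phi, deltaFun, thetaFun, gq, hmax]
  push_cast
  ring
lemma even_mul_sub_two_nonneg {b : ℤ} (hb : Even b) (hb0 : 0 ≤ b) : 0 ≤ b * (b - 2) := by
  obtain ⟨k, hk⟩ := hb
  rcases le_or_gt k 0 with h | h
  · subst hk; nlinarith
  · subst hk; nlinarith

lemma caseA (r s t n a b c : ℤ) (hr : r ≤ -1) (hs : 1 - 2 * r ≤ s) (ht : 1 - 2 * r ≤ t)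
    (ha2 : Even a) (hb2 : Even b) (hc2 : Even c)
    (ha0 : 0 ≤ a) (hb0 : 0 ≤ b) (hc0 : 0 ≤ c)
    (hba : b ≤ a) (hca : c ≤ a) (htri : a ≤ b + c) :
    Phi r s t a b c n ≤ -2 * n ∧
      (Phi r s t a b c n = -2 * n → a = 0 ∧ b = 0 ∧ c = 0) := by
  rw [Phi_eq_a r s t n a b c hba hca]
  have hrq : (r : ℚ) ≤ -1 := by exact_mod_cast hr
  have hsq : 1 - 2 * (r : ℚ) ≤ s := by exact_mod_cast hs
  have htq : 1 - 2 * (r : ℚ) ≤ t := by exact_mod_cast ht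
  have ha0q : (0 : ℚ) ≤ a := by exact_mod_cast ha0
  have hb0q : (0 : ℚ) ≤ b := by exact_mod_cast hb0
  have hc0q : (0 : ℚ) ≤ c := by exact_mod_cast hc0
  have hbaq : (b : ℚ) ≤ a := by exact_mod_cast hba
  have hcaq : (c : ℚ) ≤ a := by exact_mod_cast hca
  have htriq : (a : ℚ) ≤ b + c := by exact_mod_cast htri
  have hP4 : (0 : ℚ) ≤ (b : ℚ) * (b - 2) := by
    exact_mod_cast even_mul_sub_two_nonneg hb2 hb0
  have hP5 : (0 : ℚ) ≤ (c : ℚ) * (c - 2) := by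
    exact_mod_cast even_mul_sub_two_nonneg hc2 hc0
  have hX : (0 : ℚ) ≤ 2 * b * (b + 2) + 2 * c * (c + 2) - a * (a + 2) := by
    nlinarith [mul_nonneg (by linarith : (0:ℚ) ≤ (b:ℚ) + c - a)
        (by linarith : (0:ℚ) ≤ (a:ℚ) + b + c + 2), sq_nonneg ((b:ℚ) - c)]
  have hP1 : (0 : ℚ) ≤ (-(r : ℚ)) * (2 * b * (b + 2) + 2 * c * (c + 2) - a * (a + 2)) :=
    mul_nonneg (by linarith) hX
  have hP2 : (0 : ℚ) ≤ ((s : ℚ) - 1 + 2 * r) * (b * (b + 2)) :=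
    mul_nonneg (by linarith) (mul_nonneg hb0q (by linarith))
  have hP3 : (0 : ℚ) ≤ ((t : ℚ) - 1 + 2 * r) * (c * (c + 2)) :=
    mul_nonneg (by linarith) (mul_nonneg hc0q (by linarith))
  have hP6 : (0 : ℚ) ≤ ((a : ℚ) - b) * ((a : ℚ) - c) :=
    mul_nonneg (by linarith) (by linarith)
  constructor
  · nlinarith [hP1, hP2, hP3, hP4, hP5, hP6]
  · intro heq
    -- each piece must vanish
    have hsum : (-(r : ℚ)) * (2 * b * (b + 2) + 2 * c * (c + 2) - a * (a + 2))
        + ((s : ℚ) - 1 + 2 * r) * (b * (b + 2)) + ((t : ℚ) - 1 + 2 * r) * (c * (c + 2))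
        + (b : ℚ) * (b - 2) + (c : ℚ) * (c - 2)
        + 2 * (((a : ℚ) - b) * ((a : ℚ) - c)) = 0 := by linarith [heq]
    have hXz : (0 : ℚ) = 2 * b * (b + 2) + 2 * c * (c + 2) - a * (a + 2) := by
      have h1 : (-(r : ℚ)) * (2 * b * (b + 2) + 2 * c * (c + 2) - a * (a + 2)) = 0 := by
        linarith
      rcases mul_eq_zero.mp h1 with h | h
      · exfalso; linarith
      · linarith
    have hbz : (b : ℚ) * (b - 2) = 0 := by linarith
    have hcz : (c : ℚ) * (c - 2) = 0 := by linarith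
    have hb02 : b = 0 ∨ b = 2 := by
      have : b * (b - 2) = 0 := by exact_mod_cast hbz
      rcases mul_eq_zero.mp this with h | h <;> omega
    have hc02 : c = 0 ∨ c = 2 := by
      have : c * (c - 2) = 0 := by exact_mod_cast hcz
      rcases mul_eq_zero.mp this with h | h <;> omega
    have hXzz : 2 * b * (b + 2) + 2 * c * (c + 2) - a * (a + 2) = 0 := by
      exact_mod_cast hXz.symm
    rcases hb02 with hb' | hb' <;> rcases hc02 with hc' | hc' <;> subst hb' <;> subst hc'
    · refine ⟨by omega, rfl, rfl⟩
    · exfalso; have ha' : a = 2 := by omega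
      subst ha'; norm_num at hXzz
    · exfalso; have ha' : a = 2 := by omega
      subst ha'; norm_num at hXzz
    · exfalso
      obtain ⟨k, hk⟩ := ha2
      have ha' : a = 2 ∨ a = 4 := by omega
      rcases ha' with h | h <;> subst h <;> norm_num at hXzz
set_option maxHeartbeats 1000000 in
lemma caseB (r s t n a b c : ℤ) (hr : r ≤ -1) (hs : 1 - 2 * r ≤ s) (ht : 1 - 2 * r ≤ t)
    (ha0 : 0 ≤ a) (hb0 : 0 ≤ b) (hc0 : 0 ≤ c)
    (hab : a ≤ b) (hcb : c ≤ b) :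
    Phi r s t a b c n ≤ -2 * n ∧
      (Phi r s t a b c n = -2 * n → a = 0 ∧ b = 0 ∧ c = 0) := by
  rw [Phi_eq_b r s t n a b c hab hcb]
  have hrq : (r : ℚ) ≤ -1 := by exact_mod_cast hr
  have hsq : 1 - 2 * (r : ℚ) ≤ s := by exact_mod_cast hs
  have htq : 1 - 2 * (r : ℚ) ≤ t := by exact_mod_cast ht
  have ha0q : (0 : ℚ) ≤ a := by exact_mod_cast ha0
  have hb0q : (0 : ℚ) ≤ b := by exact_mod_cast hb0
  have hc0q : (0 : ℚ) ≤ c := by exact_mod_cast hc0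
  have habq : (a : ℚ) ≤ b := by exact_mod_cast hab
  have hcbq : (c : ℚ) ≤ b := by exact_mod_cast hcb
  have hQ1a : (0 : ℚ) ≤ ((b : ℚ) - a) * ((a : ℚ) + b + 2) :=
    mul_nonneg (by linarith) (by linarith)
  have hQ1 : (0 : ℚ) ≤ (-(r : ℚ)) * (b * (b + 2) - a * (a + 2)) :=
    mul_nonneg (by linarith) (by nlinarith [hQ1a])
  have hQ2 : (0 : ℚ) ≤ ((s : ℚ) - 1 + 2 * r) * (b * (b + 2)) :=
    mul_nonneg (by linarith) (mul_nonneg hb0q (by linarith))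
  have hQ3 : (0 : ℚ) ≤ ((t : ℚ) - 1 + 2 * r) * (c * (c + 2)) :=
    mul_nonneg (by linarith) (mul_nonneg hc0q (by linarith))
  have hQ4 : (0 : ℚ) ≤ (-1 - (r : ℚ)) * (b * (b + 2)) :=
    mul_nonneg (by linarith) (mul_nonneg hb0q (by linarith))
  have hQ5 : (0 : ℚ) ≤ (-1 - (r : ℚ)) * (c * (c + 2)) :=
    mul_nonneg (by linarith) (mul_nonneg hc0q (by linarith))
  have hQ7 : (0 : ℚ) ≤ ((b : ℚ) - a) * ((b : ℚ) - c) :=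
    mul_nonneg (by linarith) (by linarith)
  have hb2 : (0 : ℚ) ≤ (b : ℚ) * b := mul_nonneg hb0q hb0q
  have hc2 : (0 : ℚ) ≤ (c : ℚ) * c := mul_nonneg hc0q hc0q
  have key : (-(r : ℚ) / 2 * (a * (a + 2)) - (s : ℚ) / 2 * (b * (b + 2))
      - (t : ℚ) / 2 * (c * (c + 2)) + 2 * ((a : ℚ) + c) - ((b : ℚ) - a) * ((b : ℚ) - c))
      = -(1/2) * ((-(r : ℚ)) * (b * (b + 2) - a * (a + 2))
          + ((s : ℚ) - 1 + 2 * r) * (b * (b + 2)) + ((t : ℚ) - 1 + 2 * r) * (c * (c + 2))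
          + (-1 - (r : ℚ)) * (b * (b + 2)))
        - (-1 - (r : ℚ)) * (c * (c + 2)) - 2 * ((b : ℚ) - a)
        - ((b : ℚ) - a) * ((b : ℚ) - c) - (b : ℚ) * b - 3/2 * ((c : ℚ) * c) - (c : ℚ) := by
    ring
  constructor
  · linarith [hQ1, hQ2, hQ3, hQ4, hQ5, hQ7, hb2, hc2, key]
  · intro heq
    have hbz : (b : ℚ) * b ≤ 0 := by linarith [hQ1, hQ2, hQ3, hQ4, hQ5, hQ7, hc2, key]
    have hcz : (c : ℚ) ≤ 0 := by linarith [hQ1, hQ2, hQ3, hQ4, hQ5, hQ7, hb2, hc2, key]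
    have hbq : (b : ℚ) = 0 := by nlinarith [hbz, hb0q]
    have hb' : b = 0 := by exact_mod_cast hbq
    have hc' : c = 0 := by omega
    exact ⟨by omega, hb', hc'⟩
lemma main_helper (r s t n : ℤ) (hr : r ≤ -1) (hs : s > -2 * r) (ht : t > -2 * r)
    (a b c : ℤ) (hD : Dn n a b c) :
    Phi r s t a b c n ≤ -2 * n ∧ (Phi r s t a b c n = -2 * n → a = 0 ∧ b = 0 ∧ c = 0) := by
  obtain ⟨ha2, hb2, hc2, ha0, _, hb0, _, hc0, _, habs, htri⟩ := hD
  have hs' : 1 - 2 * r ≤ s := by omega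
  have ht' : 1 - 2 * r ≤ t := by omega
  have habs' := abs_le.mp habs
  rcases le_total b a with hba | hab
  · rcases le_total c a with hca | hac
    · exact caseA r s t n a b c hr hs' ht' ha2 hb2 hc2 ha0 hb0 hc0 hba hca (by omega)
    · rw [Phi_swap]
      have h := caseB r t s n a c b hr ht' hs' ha0 hc0 hb0 hac (le_trans hba hac)
      exact ⟨h.1, fun he => by obtain ⟨h1, h2, h3⟩ := h.2 he; exact ⟨h1, h3, h2⟩⟩
  · rcases le_total c b with hcb | hbc
    · exact caseB r s t n a b c hr hs' ht' ha0 hb0 hc0 hab hcb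
    · rw [Phi_swap]
      have h := caseB r t s n a c b hr ht' hs' ha0 hc0 hb0 (le_trans hab hbc) hbc
      exact ⟨h.1, fun he => by obtain ⟨h1, h2, h3⟩ := h.2 he; exact ⟨h1, h3, h2⟩⟩
/-- For odd `r, s, t` with `r ≤ −1`, `s > −2r`, `t > −2r` and `n ≥ 1`: the maximum of
`Φ(a,b,c,n)` over `D_n` equals `−2n`, attained uniquely at `(a,b,c) = (0,0,0)`. -/
theorem Phi_max_neg_two_n (r s t n : ℤ) (hrodd : Odd r) (hsodd : Odd s) (htodd : Odd t)
    (hr : r ≤ -1) (hs : s > -2 * r) (ht : t > -2 * r) (hn : 1 ≤ n) :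
    (∀ a b c : ℤ, Dn n a b c → Phi r s t a b c n ≤ -2 * n) ∧
    Dn n 0 0 0 ∧ Phi r s t 0 0 0 n = -2 * n ∧
    (∀ a b c : ℤ, Dn n a b c → Phi r s t a b c n = -2 * n → a = 0 ∧ b = 0 ∧ c = 0) := by
  refine ⟨fun a b c hD => (main_helper r s t n hr hs ht a b c hD).1, ?_, ?_,
    fun a b c hD he => (main_helper r s t n hr hs ht a b c hD).2 he⟩
  · refine ⟨Even.zero, Even.zero, Even.zero, le_refl 0, by omega, le_refl 0, by omega,
      le_refl 0, by omega, ?_, by omega⟩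
    simp
  · rw [Phi_eq_a r s t n 0 0 0 le_rfl le_rfl]
    norm_num
end
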